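/- arXiv:1012.4086 — 6 statements merged into one kernel-verified Lean document; each statement's English description precedes it below -/
import Mathlib

section
/- Let n be a natural number, and fix vectors a, b : Fin n → ℤ and an integer c. Then the set of integers { ⌊((∑ j, a j * (u j − b j)) + c) / m⌋ : m ∈ ℤ, m ≥ 1, u : Fin n → ℤ with 0 ≤ u j < m for all j } is a finite subset of ℤ (here ⌊·/m⌋ denotes the floor of the rational quotient, i.e. integer division rounding towards −∞). -/
/-! Each numerator is bounded by `m * K` with `K = ∑ j, |a j| * (1 + |b j|) + |c|`, a constant
independent of `m` and `u`: indeed `|u j - b j| ≤ m + |b j| ≤ m * (1 + |b j|)` and `|c| ≤ m * |c|`.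
Dividing by `m` confines every quotient, hence every floor, to `[-K, K]`. -/

lemma Int.floor_mem_Icc_of_abs_le {α : Type*} [Ring α] [LinearOrder α] [IsStrictOrderedRing α]
    [FloorRing α] {x : α} {K : ℤ} (h : |x| ≤ K) : ⌊x⌋ ∈ Set.Icc (-K) K := by
  obtain ⟨hlo, hhi⟩ := abs_le.mp h
  refine ⟨Int.le_floor.mpr (by exact_mod_cast hlo), ?_⟩
  exact_mod_cast (Int.floor_le x).trans hhi

lemma abs_sub_le_mul_one_add_abs {m u b : ℤ} (hm : 1 ≤ m) (hu₀ : 0 ≤ u) (hum : u < m) :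
    |u - b| ≤ m * (1 + |b|) :=
  calc |u - b| ≤ |u| + |b| := abs_sub _ _
    _ ≤ m + m * |b| := by
        rw [abs_of_nonneg hu₀]
        exact add_le_add hum.le (le_mul_of_one_le_left (abs_nonneg b) hm)
    _ = m * (1 + |b|) := by ring

lemma abs_sum_mul_sub_add_le {n : ℕ} (a b u : Fin n → ℤ) (c : ℤ) {m : ℤ} (hm : 1 ≤ m)
    (hu : ∀ j, 0 ≤ u j ∧ u j < m) :
    |(∑ j, a j * (u j - b j)) + c| ≤ m * ((∑ j, |a j| * (1 + |b j|)) + |c|) :=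
  calc |(∑ j, a j * (u j - b j)) + c| ≤ (∑ j, |a j| * |u j - b j|) + |c| := by
        refine (abs_add_le _ _).trans ?_
        simpa only [abs_mul] using
          add_le_add_left (Finset.abs_sum_le_sum_abs (fun j => a j * (u j - b j)) Finset.univ) |c|
    _ ≤ (∑ j, m * (|a j| * (1 + |b j|))) + m * |c| := by
        refine add_le_add (Finset.sum_le_sum fun j _ => ?_) (le_mul_of_one_le_left (abs_nonneg c) hm)
        rw [mul_left_comm]
        exact mul_le_mul_of_nonneg_left
          (abs_sub_le_mul_one_add_abs hm (hu j).1 (hu j).2) (abs_nonneg _)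
    _ = m * ((∑ j, |a j| * (1 + |b j|)) + |c|) := by rw [← Finset.mul_sum, mul_add]

lemma abs_intCast_div_le {α : Type*} [Field α] [LinearOrder α] [IsStrictOrderedRing α]
    {S m K : ℤ} (hm : 0 < m) (h : |S| ≤ m * K) : |(S : α) / m| ≤ K := by
  have hmQ : (0 : α) < m := by exact_mod_cast hm
  rw [abs_div, abs_of_pos hmQ, div_le_iff₀ hmQ, mul_comm]
  exact_mod_cast h

/-- Lemma 3.5(i): the set of Thomsen coefficients
`⌊((∑ j, a j * (u j − b j)) + c) / m⌋` over all `m ≥ 1` and `u ∈ P_m^n`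
is a finite subset of `ℤ`. -/
theorem stmt_0 (n : ℕ) (a b : Fin n → ℤ) (c : ℤ) :
    Set.Finite {q : ℤ | ∃ m : ℤ, 1 ≤ m ∧ ∃ u : Fin n → ℤ,
      (∀ j, 0 ≤ u j ∧ u j < m) ∧
      q = ⌊(((∑ j, a j * (u j - b j)) + c : ℤ) : ℚ) / (m : ℚ)⌋} := by
  set K : ℤ := (∑ j, |a j| * (1 + |b j|)) + |c|
  refine (Set.finite_Icc (-K) K).subset ?_
  rintro q ⟨m, hm, u, hu, rfl⟩
  exact Int.floor_mem_Icc_of_abs_le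
    (abs_intCast_div_le (by omega) (abs_sum_mul_sub_add_le a b u c hm hu))
end

section
/- Let n and k be natural numbers, A : Fin k → Fin n → ℤ a family of integer row vectors, w : Fin k → ℤ, b : Fin n → ℤ, and let l, m be positive integers. Then { (fun i => ⌊((∑ j, A i j * (u j − b j)) + w i) / m⌋) : u : Fin n → ℤ with 0 ≤ u j < m for all j } ⊆ { (fun i => ⌊((∑ j, A i j * (u j − l * b j)) + l * w i) / (l * m)⌋) : u : Fin n → ℤ with 0 ≤ u j < l * m for all j }, as subsets of (Fin k → ℤ). (Floors are floors of rational quotients.) -/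
theorem Finset.sum_mul_mul_sub_mul_add_mul {ι R : Type*} [Fintype ι] [CommRing R]
    (a u b : ι → R) (c l : R) :
    ∑ j, a j * (l * u j - l * b j) + l * c = l * (∑ j, a j * (u j - b j) + c) := by
  rw [mul_add, Finset.mul_sum]
  congr 1
  exact Finset.sum_congr rfl fun j _ => by ring

theorem stmt_2_general (n k : ℕ) (A : Fin k → Fin n → ℤ) (w : Fin k → ℤ) (b : Fin n → ℤ)
    (l m : ℤ) (hl : 0 < l) :
    {q : Fin k → ℤ | ∃ u : Fin n → ℤ, (∀ j, 0 ≤ u j ∧ u j < m) ∧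
        q = fun i => ⌊(((∑ j, A i j * (u j - b j)) + w i : ℤ) : ℚ) / (m : ℚ)⌋} ⊆
    {q : Fin k → ℤ | ∃ u : Fin n → ℤ, (∀ j, 0 ≤ u j ∧ u j < l * m) ∧
        q = fun i =>
          ⌊(((∑ j, A i j * (u j - l * b j)) + l * w i : ℤ) : ℚ) / ((l * m : ℤ) : ℚ)⌋} := by
  rintro q ⟨u, hu, rfl⟩
  refine ⟨fun j => l * u j, fun j => ⟨mul_nonneg hl.le (hu j).1,
    mul_lt_mul_of_pos_left (hu j).2 hl⟩, funext fun i => ?_⟩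
  rw [Finset.sum_mul_mul_sub_mul_add_mul, Int.cast_mul, Int.cast_mul,
    mul_div_mul_left _ _ (Int.cast_ne_zero.mpr hl.ne')]

/-- Lemma 3.5(iii): `𝔇(D)_m ⊆ 𝔇(lD)_{lm}` on the level of Thomsen coefficient
tuples. -/
theorem stmt_2 (n k : ℕ) (A : Fin k → Fin n → ℤ) (w : Fin k → ℤ) (b : Fin n → ℤ)
    (l m : ℤ) (hl : 0 < l) (hm : 0 < m) :
    {q : Fin k → ℤ | ∃ u : Fin n → ℤ, (∀ j, 0 ≤ u j ∧ u j < m) ∧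
        q = fun i => ⌊(((∑ j, A i j * (u j - b j)) + w i : ℤ) : ℚ) / (m : ℚ)⌋} ⊆
    {q : Fin k → ℤ | ∃ u : Fin n → ℤ, (∀ j, 0 ≤ u j ∧ u j < l * m) ∧
        q = fun i =>
          ⌊(((∑ j, A i j * (u j - l * b j)) + l * w i : ℤ) : ℚ) / ((l * m : ℤ) : ℚ)⌋} :=
  stmt_2_general n k A w b l m hl
end

section
/- Let n be a natural number, m a positive integer, a, b : Fin n → ℤ, and c ∈ ℤ. Then { ⌊((∑ j, a j * (u j − ((m − 1) − b j))) + (m − 1 − c)) / m⌋ : u : Fin n → ℤ with 0 ≤ u j < m for all j } = { −⌊((∑ j, a j * (u j − b j)) + c) / m⌋ : u : Fin n → ℤ with 0 ≤ u j < m for all j }, as subsets of ℤ. (Floors are floors of rational quotients.) -/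
/-! Reflecting `u ↦ (m - 1)·𝟙 - u` preserves the box `0 ≤ u j < m` and sends the numerator
`N` of one coefficient to `m - 1 - N'`, where `N'` is the numerator of the other; and for
integers `⌊(m - 1 - x) / m⌋ = -⌊x / m⌋`, since `x ↦ m - 1 - x` swaps the residues `r` and
`m - 1 - r` modulo `m`. -/

theorem Int.floor_intCast_div_intCast {K : Type*} [Field K] [LinearOrder K]
    [IsStrictOrderedRing K] [FloorRing K] (x : ℤ) {m : ℤ} (hm : 0 < m) :
    ⌊(x : K) / m⌋ = x / m := by
  lift m to ℕ using hm.le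
  simpa using Int.floor_div_natCast (x : K) m

theorem Int.sub_one_sub_ediv (x : ℤ) {m : ℤ} (hm : 0 < m) : (m - 1 - x) / m = -(x / m) := by
  have hr : 0 ≤ x % m ∧ x % m < m := ⟨Int.emod_nonneg x hm.ne', Int.emod_lt_of_pos x hm⟩
  have hx : m - 1 - x = (m - 1 - x % m) + m * -(x / m) := by
    linarith [Int.emod_add_mul_ediv x m]
  rw [hx, Int.add_mul_ediv_left _ _ hm.ne', Int.ediv_eq_zero_of_lt (by omega) (by omega),
    zero_add]

theorem Int.floor_sub_one_sub_div {K : Type*} [Field K] [LinearOrder K]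
    [IsStrictOrderedRing K] [FloorRing K] (x : ℤ) {m : ℤ} (hm : 0 < m) :
    ⌊((m - 1 - x : ℤ) : K) / m⌋ = -⌊(x : K) / m⌋ := by
  rw [Int.floor_intCast_div_intCast _ hm, Int.floor_intCast_div_intCast _ hm,
    Int.sub_one_sub_ediv x hm]

theorem sum_mul_sub_sub_add_sub {ι R : Type*} [Fintype ι] [CommRing R] (a b u : ι → R)
    (k c : R) :
    ∑ j, a j * (u j - (k - b j)) + (k - c) = k - (∑ j, a j * ((k - u j) - b j) + c) := by
  have hsum : ∑ j, a j * (u j - (k - b j)) = -∑ j, a j * ((k - u j) - b j) := by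
    rw [← Finset.sum_neg_distrib]
    exact Finset.sum_congr rfl fun j _ ↦ by ring
  rw [hsum]
  ring

/-- Lemma 3.4(iii), combinatorial form: the substitution `u ↦ (m−1)·𝟙 − u`
negates the Thomsen coefficients, as an equality of subsets of `ℤ`. -/
theorem stmt_3 (n : ℕ) (m : ℤ) (hm : 0 < m) (a b : Fin n → ℤ) (c : ℤ) :
    {q : ℤ | ∃ u : Fin n → ℤ, (∀ j, 0 ≤ u j ∧ u j < m) ∧
        q = ⌊(((∑ j, a j * (u j - ((m - 1) - b j))) + (m - 1 - c) : ℤ) : ℚ) / (m : ℚ)⌋} =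
    {q : ℤ | ∃ u : Fin n → ℤ, (∀ j, 0 ≤ u j ∧ u j < m) ∧
        q = -⌊(((∑ j, a j * (u j - b j)) + c : ℤ) : ℚ) / (m : ℚ)⌋} := by
  have reflect_mem : ∀ u : Fin n → ℤ, (∀ j, 0 ≤ u j ∧ u j < m) →
      ∀ j, 0 ≤ m - 1 - u j ∧ m - 1 - u j < m := fun u hu j ↦ by have := hu j; omega
  have key : ∀ u : Fin n → ℤ,
      ⌊(((∑ j, a j * (u j - ((m - 1) - b j))) + (m - 1 - c) : ℤ) : ℚ) / (m : ℚ)⌋ =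
        -⌊(((∑ j, a j * ((m - 1 - u j) - b j)) + c : ℤ) : ℚ) / (m : ℚ)⌋ := fun u ↦ by
    rw [sum_mul_sub_sub_add_sub, Int.floor_sub_one_sub_div _ hm]
  ext q
  constructor
  · rintro ⟨u, hu, rfl⟩
    exact ⟨fun j ↦ m - 1 - u j, reflect_mem u hu, key u⟩
  · rintro ⟨u, hu, rfl⟩
    refine ⟨fun j ↦ m - 1 - u j, reflect_mem u hu, ?_⟩
    simp only [key, sub_sub_cancel]
end

section
/- Fix a natural number d. Let S(d) ⊆ ℤ × ℤ be the union over all positive integers m of the sets { (⌊(d*y − x : ℚ)/m⌋, ⌊(−y : ℚ)/m⌋) : x, y ∈ ℤ, 0 ≤ x < m, 0 ≤ y < m }. Then S(d) = {(−1,−1), (0,−1), (−1,0), (0,0)} ∪ { (i,−1) : i ∈ ℤ, 1 ≤ i ≤ d−1 }. -/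
/-!
Everything reduces to bracketing a quotient `a / m` between consecutive multiples of `m`.
For `0 ≤ y < m` the second coordinate `⌊-y/m⌋` is `0` if `y = 0` and `-1` otherwise. If `y = 0`
the first coordinate is `⌊-x/m⌋ ∈ {-1, 0}`; if `y > 0` then `-m < dy - x < max(1, d) · m`, so it
lies between `-1` and `max(0, d - 1)`. Each of these values is attained by an explicit `(m, x, y)`.
-/

def thomsenCoeffs (d : ℕ) (m x y : ℤ) : ℤ × ℤ :=
  (⌊(((d : ℤ) * y - x : ℤ) : ℚ) / (m : ℚ)⌋, ⌊((-y : ℤ) : ℚ) / (m : ℚ)⌋)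

section FloorDiv

variable {a m : ℤ}

lemma floor_intCast_div_mem_Icc {lo hi : ℤ} (hm : 0 < m) (hlo : lo * m ≤ a)
    (hhi : a < (hi + 1) * m) : lo ≤ ⌊(a : ℚ) / m⌋ ∧ ⌊(a : ℚ) / m⌋ ≤ hi := by
  have hm' : (0 : ℚ) < m := by exact_mod_cast hm
  refine ⟨Int.le_floor.2 ?_, Int.lt_add_one_iff.1 (Int.floor_lt.2 ?_)⟩
  · rw [le_div_iff₀ hm']
    exact_mod_cast hlo
  · rw [div_lt_iff₀ hm']
    exact_mod_cast hhi

lemma floor_intCast_div_eq {q : ℤ} (hm : 0 < m) (hlo : q * m ≤ a) (hhi : a < (q + 1) * m) :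
    ⌊(a : ℚ) / m⌋ = q :=
  let h := floor_intCast_div_mem_Icc hm hlo hhi
  le_antisymm h.2 h.1

end FloorDiv

section Thomsen

variable {d : ℕ} {m x y : ℤ}

lemma thomsenCoeffs_of_eq_zero (hm : 0 < m) (hx0 : 0 ≤ x) (hxm : x < m) :
    thomsenCoeffs d m x 0 = (if x = 0 then 0 else -1, 0) := by
  refine Prod.ext ?_ (floor_intCast_div_eq hm (by simp) (by simpa using hm))
  split_ifs with hx
  · exact floor_intCast_div_eq hm (by simp [hx]) (by simp [hx, hm])
  · exact floor_intCast_div_eq hm (by simp; omega) (by simp; omega)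

lemma thomsenCoeffs_of_pos (hm : 0 < m) (hx0 : 0 ≤ x) (hxm : x < m) (hy0 : 0 < y)
    (hym : y < m) :
    -1 ≤ (thomsenCoeffs d m x y).1 ∧ (thomsenCoeffs d m x y).1 ≤ max 0 ((d : ℤ) - 1) ∧
      (thomsenCoeffs d m x y).2 = -1 := by
  have hupper : (d : ℤ) * y - x < (max 0 ((d : ℤ) - 1) + 1) * m :=
    calc (d : ℤ) * y - x ≤ max 1 (d : ℤ) * y := by
          nlinarith [mul_le_mul_of_nonneg_right (le_max_right 1 (d : ℤ)) hy0.le]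
      _ < max 1 (d : ℤ) * m := mul_lt_mul_of_pos_left hym (by positivity)
      _ = (max 0 ((d : ℤ) - 1) + 1) * m := by congr 1; omega
  have hlower : -1 * m ≤ (d : ℤ) * y - x := by nlinarith
  obtain ⟨h₁, h₂⟩ := floor_intCast_div_mem_Icc hm hlower hupper
  exact ⟨h₁, h₂, floor_intCast_div_eq hm (by omega) (by omega)⟩

lemma thomsenCoeffs_mem (hm : 0 < m) (hx0 : 0 ≤ x) (hxm : x < m) (hy0 : 0 ≤ y) (hym : y < m) :
    thomsenCoeffs d m x y ∈ ({(-1, -1), (0, -1), (-1, 0), (0, 0)} : Set (ℤ × ℤ)) ∪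
      {p : ℤ × ℤ | ∃ i : ℤ, 1 ≤ i ∧ i ≤ (d : ℤ) - 1 ∧ p = (i, -1)} := by
  rcases hy0.eq_or_lt with rfl | hy
  · rw [thomsenCoeffs_of_eq_zero hm hx0 hxm]
    split_ifs <;> simp
  · obtain ⟨h₁, h₂, h₃⟩ := thomsenCoeffs_of_pos (d := d) hm hx0 hxm hy hym
    generalize thomsenCoeffs d m x y = q at h₁ h₂ h₃ ⊢
    obtain ⟨q₃, q₄⟩ := q
    dsimp only at h₁ h₂ h₃
    subst h₃
    rcases lt_trichotomy q₃ 0 with h | rfl | h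
    · obtain rfl : q₃ = -1 := by omega
      simp
    · simp
    · exact Or.inr ⟨q₃, h, by omega, rfl⟩

lemma thomsenCoeffs_eq {q₃ q₄ : ℤ} (hm : 0 < m) (h₃ : q₃ * m ≤ d * y - x)
    (h₃' : d * y - x < (q₃ + 1) * m) (h₄ : q₄ * m ≤ -y) (h₄' : -y < (q₄ + 1) * m) :
    thomsenCoeffs d m x y = (q₃, q₄) :=
  Prod.ext (floor_intCast_div_eq hm h₃ h₃') (floor_intCast_div_eq hm h₄ h₄')

end Thomsen

/-- §4.1: the set `𝔇` of Thomsen coefficient pairs on the Hirzebruch surface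
`Σ_d`. -/
theorem stmt_6 (d : ℕ) :
    {p : ℤ × ℤ | ∃ m : ℤ, 0 < m ∧ ∃ x y : ℤ,
        0 ≤ x ∧ x < m ∧ 0 ≤ y ∧ y < m ∧
        p = (⌊(((d : ℤ) * y - x : ℤ) : ℚ) / (m : ℚ)⌋, ⌊((-y : ℤ) : ℚ) / (m : ℚ)⌋)} =
    ({(-1, -1), (0, -1), (-1, 0), (0, 0)} : Set (ℤ × ℤ)) ∪
      {p : ℤ × ℤ | ∃ i : ℤ, 1 ≤ i ∧ i ≤ (d : ℤ) - 1 ∧ p = (i, -1)} := by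
  ext p
  constructor
  · rintro ⟨m, hm, x, y, hx0, hxm, hy0, hym, rfl⟩
    exact thomsenCoeffs_mem hm hx0 hxm hy0 hym
  · rintro ((rfl | rfl | rfl | rfl) | ⟨i, hi₁, hi₂, rfl⟩)
    · exact ⟨d + 2, by omega, d + 1, 1, by omega, by omega, by omega, by omega,
        (thomsenCoeffs_eq (by omega) (by omega) (by omega) (by omega) (by omega)).symm⟩
    · exact ⟨d + 2, by omega, d, 1, by omega, by omega, by omega, by omega,
        (thomsenCoeffs_eq (by omega) (by omega) (by omega) (by omega) (by omega)).symm⟩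
    · exact ⟨2, by omega, 1, 0, by omega, by omega, by omega, by omega,
        (thomsenCoeffs_eq (by omega) (by omega) (by omega) (by omega) (by omega)).symm⟩
    · exact ⟨1, by omega, 0, 0, by omega, by omega, by omega, by omega,
        (thomsenCoeffs_eq (by omega) (by omega) (by omega) (by omega) (by omega)).symm⟩
    -- `d (i + 1) - (d - i) = i (d + 1)`
    · exact ⟨d + 1, by omega, d - i, i + 1, by omega, by omega, by omega, by omega,
        (thomsenCoeffs_eq (by omega) (by nlinarith) (by nlinarith) (by omega) (by omega)).symm⟩
end

section
/- Let S ⊆ ℤ⁵ be the union over all positive integers m of the sets { (⌊(−y + z : ℚ)/m⌋, ⌊(−y : ℚ)/m⌋, ⌊(−z : ℚ)/m⌋, ⌊(y − z : ℚ)/m⌋, ⌊(−x + y : ℚ)/m⌋) : x, y, z ∈ ℤ, 0 ≤ x < m, 0 ≤ y < m, 0 ≤ z < m }. Then S = { (0,0,0,0,0), (0,0,0,0,−1), (0,0,−1,−1,0), (0,0,−1,−1,−1), (−1,−1,0,0,0), (−1,−1,0,0,−1), (0,−1,−1,−1,0), (0,−1,−1,−1,−1), (0,−1,−1,0,0), (0,−1,−1,0,−1),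 (−1,−1,−1,0,0), (−1,−1,−1,0,−1) }; in particular S has exactly 12 elements. -/
/-!
Each of the five arguments `-y + z`, `-y`, `-z`, `y - z`, `-x + y` lies in `[-m, m)` when
`0 ≤ x, y, z < m`, so its floor after dividing by `m` is `0` or `-1` according to its sign.
The tuple therefore only records the sign pattern of these five forms, and as `m` grows every
point of the nonnegative orthant becomes admissible; the twelve tuples are the sign patterns
realised there.
-/

theorem Int.floor_intCast_div_eq_ite {k : Type*} [Field k] [LinearOrder k] [IsStrictOrderedRing k]
    [FloorRing k] {a m : ℤ} (hm : 0 < m) (hlo : -m ≤ a) (hhi : a < m) :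
    ⌊(a : k) / m⌋ = if 0 ≤ a then 0 else -1 := by
  have hm' : (0 : k) < m := by exact_mod_cast hm
  split_ifs with ha
  · rw [Int.floor_eq_zero_iff]
    refine ⟨div_nonneg (by exact_mod_cast ha) hm'.le, (div_lt_one hm').2 (by exact_mod_cast hhi)⟩
  · rw [Int.floor_eq_iff, le_div_iff₀ hm']
    push_cast
    refine ⟨by linarith [(by exact_mod_cast hlo : (-m : k) ≤ a)], ?_⟩
    rw [neg_add_cancel]
    exact div_neg_of_neg_of_pos (by exact_mod_cast (not_le.1 ha)) hm'

def signPattern (x y z : ℤ) : ℤ × ℤ × ℤ × ℤ × ℤ :=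
  (if 0 ≤ -y + z then 0 else -1, if 0 ≤ -y then 0 else -1, if 0 ≤ -z then 0 else -1,
    if 0 ≤ y - z then 0 else -1, if 0 ≤ -x + y then 0 else -1)

theorem floor_tuple_eq_signPattern {m x y z : ℤ} (hm : 0 < m) (hx0 : 0 ≤ x) (hxm : x < m)
    (hy0 : 0 ≤ y) (hym : y < m) (hz0 : 0 ≤ z) (hzm : z < m) :
    ((⌊((-y + z : ℤ) : ℚ) / (m : ℚ)⌋, ⌊((-y : ℤ) : ℚ) / (m : ℚ)⌋,
      ⌊((-z : ℤ) : ℚ) / (m : ℚ)⌋, ⌊((y - z : ℤ) : ℚ) / (m : ℚ)⌋,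
      ⌊((-x + y : ℤ) : ℚ) / (m : ℚ)⌋) : ℤ × ℤ × ℤ × ℤ × ℤ) = signPattern x y z := by
  rw [Int.floor_intCast_div_eq_ite (a := -y + z) hm (by omega) (by omega),
    Int.floor_intCast_div_eq_ite (a := -y) hm (by omega) (by omega),
    Int.floor_intCast_div_eq_ite (a := -z) hm (by omega) (by omega),
    Int.floor_intCast_div_eq_ite (a := y - z) hm (by omega) (by omega),
    Int.floor_intCast_div_eq_ite (a := -x + y) hm (by omega) (by omega), signPattern]

theorem floor_tuples_eq_signPatterns :
    {p : ℤ × ℤ × ℤ × ℤ × ℤ | ∃ m : ℤ, 0 < m ∧ ∃ x y z : ℤ,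
        0 ≤ x ∧ x < m ∧ 0 ≤ y ∧ y < m ∧ 0 ≤ z ∧ z < m ∧
        p = (⌊((-y + z : ℤ) : ℚ) / (m : ℚ)⌋, ⌊((-y : ℤ) : ℚ) / (m : ℚ)⌋,
             ⌊((-z : ℤ) : ℚ) / (m : ℚ)⌋, ⌊((y - z : ℤ) : ℚ) / (m : ℚ)⌋,
             ⌊((-x + y : ℤ) : ℚ) / (m : ℚ)⌋)} =
      {p | ∃ x y z : ℤ, 0 ≤ x ∧ 0 ≤ y ∧ 0 ≤ z ∧ p = signPattern x y z} := by
  ext p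
  constructor
  · rintro ⟨m, hm, x, y, z, hx0, hxm, hy0, hym, hz0, hzm, rfl⟩
    exact ⟨x, y, z, hx0, hy0, hz0, floor_tuple_eq_signPattern hm hx0 hxm hy0 hym hz0 hzm⟩
  · rintro ⟨x, y, z, hx0, hy0, hz0, rfl⟩
    refine ⟨x + y + z + 1, by omega, x, y, z, hx0, by omega, hy0, by omega, hz0, by omega, ?_⟩
    exact (floor_tuple_eq_signPattern (by omega) hx0 (by omega) hy0 (by omega) hz0
      (by omega)).symm

theorem signPatterns_nonneg_eq :
    {p | ∃ x y z : ℤ, 0 ≤ x ∧ 0 ≤ y ∧ 0 ≤ z ∧ p = signPattern x y z} =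
      ({(0, 0, 0, 0, 0), (0, 0, 0, 0, -1), (0, 0, -1, -1, 0), (0, 0, -1, -1, -1),
        (-1, -1, 0, 0, 0), (-1, -1, 0, 0, -1), (0, -1, -1, -1, 0),
        (0, -1, -1, -1, -1), (0, -1, -1, 0, 0), (0, -1, -1, 0, -1),
        (-1, -1, -1, 0, 0), (-1, -1, -1, 0, -1)} : Set (ℤ × ℤ × ℤ × ℤ × ℤ)) := by
  ext p
  simp only [Set.mem_ofPred_eq, Set.mem_insert_iff, Set.mem_singleton_iff]
  constructor
  · rintro ⟨x, y, z, hx, hy, hz, rfl⟩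
    simp only [signPattern, Prod.mk.injEq]
    split_ifs <;> omega
  · rintro (rfl | rfl | rfl | rfl | rfl | rfl | rfl | rfl | rfl | rfl | rfl | rfl)
    exacts [⟨0, 0, 0, by decide⟩, ⟨1, 0, 0, by decide⟩, ⟨0, 0, 1, by decide⟩,
      ⟨1, 0, 1, by decide⟩, ⟨0, 1, 0, by decide⟩, ⟨2, 1, 0, by decide⟩, ⟨0, 1, 2, by decide⟩,
      ⟨2, 1, 2, by decide⟩, ⟨0, 1, 1, by decide⟩, ⟨2, 1, 1, by decide⟩, ⟨0, 2, 1, by decide⟩,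
      ⟨3, 2, 1, by decide⟩]

/-- §4.4: the set `𝔇` of Thomsen coefficient 5-tuples on the toric Fano 3-fold
of type (18). -/
theorem stmt_10 :
    {p : ℤ × ℤ × ℤ × ℤ × ℤ | ∃ m : ℤ, 0 < m ∧ ∃ x y z : ℤ,
        0 ≤ x ∧ x < m ∧ 0 ≤ y ∧ y < m ∧ 0 ≤ z ∧ z < m ∧
        p = (⌊((-y + z : ℤ) : ℚ) / (m : ℚ)⌋, ⌊((-y : ℤ) : ℚ) / (m : ℚ)⌋,
             ⌊((-z : ℤ) : ℚ) / (m : ℚ)⌋, ⌊((y - z : ℤ) : ℚ) / (m : ℚ)⌋,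
             ⌊((-x + y : ℤ) : ℚ) / (m : ℚ)⌋)} =
      ({(0, 0, 0, 0, 0), (0, 0, 0, 0, -1), (0, 0, -1, -1, 0), (0, 0, -1, -1, -1),
        (-1, -1, 0, 0, 0), (-1, -1, 0, 0, -1), (0, -1, -1, -1, 0),
        (0, -1, -1, -1, -1), (0, -1, -1, 0, 0), (0, -1, -1, 0, -1),
        (-1, -1, -1, 0, 0), (-1, -1, -1, 0, -1)} : Set (ℤ × ℤ × ℤ × ℤ × ℤ)) ∧
    Set.ncard {p : ℤ × ℤ × ℤ × ℤ × ℤ | ∃ m : ℤ, 0 < m ∧ ∃ x y z : ℤ,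
        0 ≤ x ∧ x < m ∧ 0 ≤ y ∧ y < m ∧ 0 ≤ z ∧ z < m ∧
        p = (⌊((-y + z : ℤ) : ℚ) / (m : ℚ)⌋, ⌊((-y : ℤ) : ℚ) / (m : ℚ)⌋,
             ⌊((-z : ℤ) : ℚ) / (m : ℚ)⌋, ⌊((y - z : ℤ) : ℚ) / (m : ℚ)⌋,
             ⌊((-x + y : ℤ) : ℚ) / (m : ℚ)⌋)} = 12 := by
  rw [floor_tuples_eq_signPatterns, signPatterns_nonneg_eq]
  refine ⟨rfl, ?_⟩
  simp [Set.ncard_insert_of_notMem]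
end

section
/- Let S ⊆ ℤ³ be the union over all positive integers m of the sets { (⌊(−x − z : ℚ)/m⌋, ⌊(x − y : ℚ)/m⌋, ⌊(−x : ℚ)/m⌋) : x, y, z ∈ ℤ, 0 ≤ x < m, 0 ≤ y < m, 0 ≤ z < m }. Then S = { (0,0,0), (0,−1,0), (−1,0,0), (−1,−1,0), (−1,0,−1), (−1,−1,−1), (−2,0,−1), (−2,−1,−1) }; in particular S has exactly 8 elements. -/
/-!
With `t = x/m`, `v = y/m`, `w = z/m` in `[0, 1)`, the triple is `(⌊-t - w⌋, ⌊t - v⌋, ⌊-t⌋)`.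
Subtracting a number in `[0, 1)` lowers a floor by `0` or `1`, so `⌊-t⌋ ∈ {0, -1}`,
`⌊t - v⌋ ∈ {0, -1}` and `⌊-t - w⌋ - ⌊-t⌋ ∈ {0, -1}`: at most `2 · 2 · 2 = 8` triples.
All eight already occur for `m = 4`.
-/

lemma Int.floor_sub_eq_or_of_nonneg_of_lt_one {α : Type*} [Ring α] [LinearOrder α]
    [IsOrderedRing α] [FloorRing α] (r : α) {s : α} (hs₀ : 0 ≤ s) (hs₁ : s < 1) :
    ⌊r - s⌋ = ⌊r⌋ ∨ ⌊r - s⌋ = ⌊r⌋ - 1 := by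
  have hle : ⌊r - s⌋ ≤ ⌊r⌋ := Int.floor_mono (sub_le_self r hs₀)
  have hge : ⌊r⌋ - 1 ≤ ⌊r - s⌋ := by
    rw [← Int.floor_sub_one]
    exact Int.floor_mono (sub_le_sub_left hs₁.le r)
  omega

/-- The coefficients `(q₄, q₅, q₆)` of Thomsen's summand attached to `u = (x, y, z)`. -/
def thomsenTriple (m x y z : ℤ) : ℤ × ℤ × ℤ :=
  (⌊((-x - z : ℤ) : ℚ) / (m : ℚ)⌋, ⌊((x - y : ℤ) : ℚ) / (m : ℚ)⌋, ⌊((-x : ℤ) : ℚ) / (m : ℚ)⌋)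

def thomsenTriples : Set (ℤ × ℤ × ℤ) :=
  {p | ∃ m : ℤ, 0 < m ∧ ∃ x y z : ℤ,
    0 ≤ x ∧ x < m ∧ 0 ≤ y ∧ y < m ∧ 0 ≤ z ∧ z < m ∧ p = thomsenTriple m x y z}

def expectedTriples : Finset (ℤ × ℤ × ℤ) :=
  {(0, 0, 0), (0, -1, 0), (-1, 0, 0), (-1, -1, 0), (-1, 0, -1),
    (-1, -1, -1), (-2, 0, -1), (-2, -1, -1)}

lemma intCast_div_mem_Ico {m x : ℤ} (hm : 0 < m) (hx₀ : 0 ≤ x) (hx : x < m) :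
    (x : ℚ) / m ∈ Set.Ico 0 1 := by
  have hmQ : (0 : ℚ) < m := by exact_mod_cast hm
  exact ⟨by positivity, (div_lt_one hmQ).2 (by exact_mod_cast hx)⟩

lemma thomsenTriple_mem_expectedTriples {m x y z : ℤ} (hm : 0 < m) (hx₀ : 0 ≤ x) (hx : x < m)
    (hy₀ : 0 ≤ y) (hy : y < m) (hz₀ : 0 ≤ z) (hz : z < m) :
    thomsenTriple m x y z ∈ expectedTriples := by
  obtain ⟨ht₀, ht₁⟩ := intCast_div_mem_Ico hm hx₀ hx
  obtain ⟨hv₀, hv₁⟩ := intCast_div_mem_Ico hm hy₀ hy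
  obtain ⟨hw₀, hw₁⟩ := intCast_div_mem_Ico hm hz₀ hz
  set t : ℚ := x / m
  have htriple : thomsenTriple m x y z = (⌊-t - z / m⌋, ⌊t - y / m⌋, ⌊-t⌋) := by
    simp only [thomsenTriple, t]
    push_cast
    ring_nf
  have hft : ⌊t⌋ = 0 := Int.floor_eq_zero_iff.2 ⟨ht₀, ht₁⟩
  have h₆ : ⌊-t⌋ = 0 ∨ ⌊-t⌋ = -1 := by
    simpa using Int.floor_sub_eq_or_of_nonneg_of_lt_one 0 ht₀ ht₁
  have h₅ : ⌊t - y / m⌋ = 0 ∨ ⌊t - y / m⌋ = -1 := by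
    simpa [hft] using Int.floor_sub_eq_or_of_nonneg_of_lt_one t hv₀ hv₁
  have h₄ := Int.floor_sub_eq_or_of_nonneg_of_lt_one (-t) hw₀ hw₁
  rw [htriple]
  rcases h₆ with h₆ | h₆ <;> rcases h₅ with h₅ | h₅ <;> rcases h₄ with h₄ | h₄ <;>
    simp [h₄, h₅, h₆, expectedTriples]

lemma expectedTriples_subset_thomsenTriples : ↑expectedTriples ⊆ thomsenTriples := by
  have realized : ∀ p ∈ expectedTriples, ∃ x y z : ℤ,
      0 ≤ x ∧ x < 4 ∧ 0 ≤ y ∧ y < 4 ∧ 0 ≤ z ∧ z < 4 ∧ p = thomsenTriple 4 x y z := by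
    simp only [expectedTriples, Finset.mem_insert, Finset.mem_singleton, thomsenTriple]
    rintro p (rfl | rfl | rfl | rfl | rfl | rfl | rfl | rfl)
    exacts [⟨0, 0, 0, by norm_num⟩, ⟨0, 1, 0, by norm_num⟩, ⟨0, 0, 1, by norm_num⟩,
      ⟨0, 1, 1, by norm_num⟩, ⟨1, 0, 0, by norm_num⟩, ⟨1, 2, 0, by norm_num⟩,
      ⟨2, 0, 3, by norm_num⟩, ⟨2, 3, 3, by norm_num⟩]
  intro p hp
  exact ⟨4, by norm_num, realized p hp⟩

/-- §4.5: the set `𝔇` of Thomsen coefficient triples on the toric Fano 3-fold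
of type (8). -/
theorem stmt_11 :
    {p : ℤ × ℤ × ℤ | ∃ m : ℤ, 0 < m ∧ ∃ x y z : ℤ,
        0 ≤ x ∧ x < m ∧ 0 ≤ y ∧ y < m ∧ 0 ≤ z ∧ z < m ∧
        p = (⌊((-x - z : ℤ) : ℚ) / (m : ℚ)⌋, ⌊((x - y : ℤ) : ℚ) / (m : ℚ)⌋,
             ⌊((-x : ℤ) : ℚ) / (m : ℚ)⌋)} =
      ({(0, 0, 0), (0, -1, 0), (-1, 0, 0), (-1, -1, 0), (-1, 0, -1),
        (-1, -1, -1), (-2, 0, -1), (-2, -1, -1)} : Set (ℤ × ℤ × ℤ)) ∧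
    Set.ncard {p : ℤ × ℤ × ℤ | ∃ m : ℤ, 0 < m ∧ ∃ x y z : ℤ,
        0 ≤ x ∧ x < m ∧ 0 ≤ y ∧ y < m ∧ 0 ≤ z ∧ z < m ∧
        p = (⌊((-x - z : ℤ) : ℚ) / (m : ℚ)⌋, ⌊((x - y : ℤ) : ℚ) / (m : ℚ)⌋,
             ⌊((-x : ℤ) : ℚ) / (m : ℚ)⌋)} = 8 := by
  have hS : thomsenTriples = ↑expectedTriples := by
    refine Set.Subset.antisymm ?_ expectedTriples_subset_thomsenTriples
    rintro p ⟨m, hm, x, y, z, hx₀, hx, hy₀, hy, hz₀, hz, rfl⟩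
    exact thomsenTriple_mem_expectedTriples hm hx₀ hx hy₀ hy hz₀ hz
  change thomsenTriples = _ ∧ thomsenTriples.ncard = 8
  rw [hS, Set.ncard_coe_finset]
  exact ⟨by simp [expectedTriples], by decide⟩
end
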